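/- arXiv:2012.05845 — 2 statements merged into one kernel-verified Lean document; each statement's English description precedes it below -/
import Mathlib

section
/- For any permutation σ ∈ S_n, any transposition τ, and any i ≥ 1, the individual RSK row lengths satisfy |λ_i(σ) − λ_i(σ∘τ)| ≤ 4. -/
open Finset
open scoped Classical

/-- `greeneSum σ k` is the maximal cardinality of a subset of `Fin n` which is a union of
`k` increasing subsequences of `σ`.  By Greene's theorem, this equals
`λ₁(σ) + ⋯ + λ_k(σ)`, the sum of the first `k` rows of the RSK shape of `σ`. -/
noncomputable def greeneSum {n : ℕ} (σ : Equiv.Perm (Fin n)) (k : ℕ) : ℕ :=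
  Finset.sup ((Finset.univ : Finset (Finset (Fin n))).filter
    (fun s => ∃ t : Fin k → Finset (Fin n), s = Finset.univ.biUnion t ∧
      ∀ a : Fin k, ∀ i ∈ t a, ∀ j ∈ t a, i < j → σ i < σ j)) Finset.card

/-- `rskRow σ i = λ_i(σ)`, the `i`-th row (1-indexed) of the RSK shape of `σ`,
via Greene's theorem. -/
noncomputable def rskRow {n : ℕ} (σ : Equiv.Perm (Fin n)) (i : ℕ) : ℕ :=
  greeneSum σ i - greeneSum σ (i - 1)

lemma greeneSum_mono {n : ℕ} (σ : Equiv.Perm (Fin n)) : Monotone (greeneSum σ) := by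
  intro k l hkl
  apply Finset.sup_le
  intro s hs
  rw [Finset.mem_filter] at hs
  obtain ⟨-, t, hst, ht⟩ := hs
  set t' : Fin l → Finset (Fin n) :=
    fun j => if h : (j : ℕ) < k then t ⟨j, h⟩ else ∅ with ht'
  apply Finset.le_sup (f := Finset.card)
  rw [Finset.mem_filter]
  refine ⟨Finset.mem_univ _, t', ?_, ?_⟩
  · rw [hst]
    ext x
    simp only [Finset.mem_biUnion, Finset.mem_univ, true_and, ht']
    constructor
    · rintro ⟨c, hc⟩
      exact ⟨⟨c, lt_of_lt_of_le c.2 hkl⟩, by simp [c.2, hc]⟩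
    · rintro ⟨c, hc⟩
      by_cases h : (c : ℕ) < k
      · simp only [dif_pos h] at hc
        exact ⟨⟨c, h⟩, hc⟩
      · simp [dif_neg h] at hc
  · intro c i hi j hj hij
    by_cases h : (c : ℕ) < k
    · simp only [ht', dif_pos h] at hi hj
      exact ht _ _ hi _ hj hij
    · simp [ht', dif_neg h] at hi

lemma greeneSum_mul_swap_le {n : ℕ} (σ : Equiv.Perm (Fin n)) (a b : Fin n) (k : ℕ) :
    greeneSum (σ * Equiv.swap a b) k ≤ greeneSum σ k + 2 := by
  apply Finset.sup_le
  intro s hs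
  rw [Finset.mem_filter] at hs
  obtain ⟨-, t, hst, ht⟩ := hs
  set t' : Fin k → Finset (Fin n) := fun c => t c \ {a, b} with ht'
  have hmem : (s \ {a, b}) ∈ (Finset.univ : Finset (Finset (Fin n))).filter
      (fun s => ∃ t : Fin k → Finset (Fin n), s = Finset.univ.biUnion t ∧
        ∀ a : Fin k, ∀ i ∈ t a, ∀ j ∈ t a, i < j → σ i < σ j) := by
    rw [Finset.mem_filter]
    refine ⟨Finset.mem_univ _, t', ?_, ?_⟩
    · rw [hst]
      ext x
      simp only [Finset.mem_sdiff, Finset.mem_biUnion, Finset.mem_univ, true_and, ht']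
      tauto
    · intro c i hi j hj hij
      simp only [ht', Finset.mem_sdiff, Finset.mem_insert, Finset.mem_singleton,
        not_or] at hi hj
      have h1 : (σ * Equiv.swap a b) i = σ i := by
        simp [Equiv.Perm.mul_apply, Equiv.swap_apply_of_ne_of_ne hi.2.1 hi.2.2]
      have h2 : (σ * Equiv.swap a b) j = σ j := by
        simp [Equiv.Perm.mul_apply, Equiv.swap_apply_of_ne_of_ne hj.2.1 hj.2.2]
      have := ht c i hi.1 j hj.1 hij
      rwa [h1, h2] at this
  have h1 : (s \ {a, b}).card ≤ greeneSum σ k := Finset.le_sup (f := Finset.card) hmem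
  have h2 : s.card ≤ (s \ {a, b}).card + ({a, b} : Finset (Fin n)).card :=
    Finset.card_le_card_sdiff_add_card
  have h3 : ({a, b} : Finset (Fin n)).card ≤ 2 := by
    apply le_trans (Finset.card_insert_le _ _)
    simp
  omega

lemma greeneSum_abs_le {n : ℕ} (σ : Equiv.Perm (Fin n)) (a b : Fin n) (k : ℕ) :
    greeneSum σ k ≤ greeneSum (σ * Equiv.swap a b) k + 2 := by
  have := greeneSum_mul_swap_le (σ * Equiv.swap a b) a b k
  rwa [mul_assoc, Equiv.swap_mul_self, mul_one] at this

/-- Right-composition with a transposition changes each row `λ_i` by at most 4. -/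
theorem rskRow_mul_swap_diff_le_four {n : ℕ} (σ : Equiv.Perm (Fin n)) (a b : Fin n)
    (hab : a ≠ b) (i : ℕ) (hi : 1 ≤ i) :
    |(rskRow σ i : ℤ) - (rskRow (σ * Equiv.swap a b) i : ℤ)| ≤ 4 := by
  have h1 := greeneSum_mul_swap_le σ a b i
  have h2 := greeneSum_abs_le σ a b i
  have h3 := greeneSum_mul_swap_le σ a b (i - 1)
  have h4 := greeneSum_abs_le σ a b (i - 1)
  have h5 : greeneSum σ (i - 1) ≤ greeneSum σ i := greeneSum_mono σ (Nat.sub_le i 1)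
  have h6 : greeneSum (σ * Equiv.swap a b) (i - 1) ≤ greeneSum (σ * Equiv.swap a b) i :=
    greeneSum_mono _ (Nat.sub_le i 1)
  unfold rskRow
  rw [abs_le]
  constructor <;> omega
end

section
/- If σ_n is a uniform random permutation of S_n, then #(σ_n)/log(n) converges to 1 in probability as n → ∞; moreover P(|#(σ_n)/log(n) − 1| > α) = O(1/log n) for every fixed α > 0. -/
open Finset Filter
open scoped Classical Topology

/-- The number of cycles of a permutation of `Fin n`, counting fixed points as
(singleton) cycles. -/
noncomputable def numCycles {n : ℕ} (σ : Equiv.Perm (Fin n)) : ℕ :=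
  σ.cycleType.card + (Finset.univ.filter fun x => σ x = x).card

/-- The probability, under the uniform measure on `S_n`, that
`|#(σ)/log n − 1| > α`. -/
noncomputable def badProb (n : ℕ) (α : ℝ) : ℝ :=
  ((Finset.univ.filter fun σ : Equiv.Perm (Fin n) =>
      α < |(numCycles σ : ℝ) / Real.log n - 1|).card : ℝ) / (Nat.factorial n : ℝ)

/-!
Writing a permutation of `Fin (n + 1)` as `decomposeFin.symm (p, e)` inserts the new point `0`
into `e ∈ S_n`: as a fixed point if `p = 0`, and into the cycle of `p` otherwise. So the number
of cycles grows by the indicator of `p = 0`, a Bernoulli variable of mean `1/(n+1)` independent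
of `e`. Inductively `#(σ_n) - H_n` is a sum of independent centred terms, whence its second moment
is at most `H_n`. As `log n ≤ H_n ≤ 1 + log n`, Chebyshev's inequality bounds
`P(|#(σ_n)/log n - 1| > α)` by `8 / (α² log n)` once `log n` is large.
-/

namespace Equiv.Perm

variable {α : Type*} [Fintype α] [DecidableEq α]

lemma card_parts_partition (σ : Perm α) :
    σ.partition.parts.card = σ.cycleType.card + (Fintype.card α - #σ.support) := by
  simp [parts_partition]

lemma card_parts_partition_swap_mul_of_apply_eq_self {f : Perm α} {a b : α} (hab : a ≠ b)
    (ha : f a = a) (hb : f b = b) :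
    (swap a b * f).partition.parts.card + 1 = f.partition.parts.card := by
  have hdisj : Disjoint (swap a b) f := by
    intro x
    rcases eq_or_ne x a with rfl | hxa
    · exact Or.inr ha
    rcases eq_or_ne x b with rfl | hxb
    · exact Or.inr hb
    exact Or.inl (swap_apply_of_ne_of_ne hxa hxb)
  have hsupp := card_le_univ (swap a b * f).support
  rw [hdisj.card_support_mul, card_support_swap hab] at hsupp
  simp only [card_parts_partition, hdisj.cycleType_mul, (isCycle_swap hab).cycleType,
    hdisj.card_support_mul, card_support_swap hab, Multiset.card_add, Multiset.card_singleton]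
  omega

-- `swap x (g x) * g` cuts `x` out of its cycle, of length at least `3`, as a new fixed point.
lemma card_parts_partition_swap_mul_self {g : Perm α} {x : α} (hx : g (g x) ≠ x) :
    (swap x (g x) * g).partition.parts.card = g.partition.parts.card + 1 := by
  have hgx : g x ≠ x := fun h => hx (by rw [h, h])
  set c := g.cycleOf x
  set h := g * c⁻¹
  have hc : c ∈ g.cycleFactorsFinset :=
    cycleOf_mem_cycleFactorsFinset_iff.mpr (mem_support.mpr hgx)
  have hhc : Disjoint h c := disjoint_mul_inv_of_mem_cycleFactorsFinset hc
  have hcx : c x = g x := cycleOf_apply_self g x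
  have hccx : c (c x) ≠ x := by rwa [hcx, cycleOf_apply_apply_self]
  have hcyc : (swap x (c x) * c).IsCycle := (isCycle_cycleOf g hgx).swap_mul (hcx ▸ hgx) hccx
  have hsplit : swap x (g x) * g = (swap x (c x) * c) * h := by
    rw [hcx, mul_assoc, ← hhc.commute.eq, inv_mul_cancel_right]
  have hdisj : Disjoint (swap x (c x) * c) h :=
    hhc.symm.mono (by rw [support_swap_mul_eq c x hccx]; exact sdiff_subset) le_rfl
  have hg : g = c * h := by rw [← hhc.commute.eq, inv_mul_cancel_right]
  have hcard : (swap x (g x) * g).cycleType.card = g.cycleType.card := by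
    rw [hsplit, hdisj.cycleType_mul, hcyc.cycleType, hg, hhc.symm.cycleType_mul,
      (isCycle_cycleOf g hgx).cycleType]
    simp
  have hsupp : #(swap x (g x) * g).support + 1 = #g.support := by
    rw [support_swap_mul_eq g x hx, card_sdiff_of_subset (by simpa using hgx), card_singleton,
      Nat.sub_add_cancel (card_pos.mpr ⟨x, mem_support.mpr hgx⟩)]
  have hle := card_le_univ g.support
  rw [card_parts_partition, card_parts_partition, hcard]
  omega

theorem card_parts_partition_swap_mul {f : Perm α} {a b : α} (hab : a ≠ b) (ha : f a = a) :
    (swap a b * f).partition.parts.card + 1 = f.partition.parts.card := by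
  by_cases hb : f b = b
  · exact card_parts_partition_swap_mul_of_apply_eq_self hab ha hb
  set g := swap a b * f
  have hga : g a = b := by simp [g, ha]
  have hfb : f b ≠ a := fun h => hab (f.injective (h.trans ha.symm)).symm
  have hgga : g (g a) ≠ a := by
    rwa [hga, mul_apply, swap_apply_of_ne_of_ne hfb hb]
  have hsplit := card_parts_partition_swap_mul_self hgga
  rwa [hga, swap_mul_self_mul, eq_comm] at hsplit

theorem card_parts_partition_extendDomain {β : Type*} [Fintype β] [DecidableEq β]
    {p : β → Prop} [DecidablePred p] (e : α ≃ Subtype p) (g : Perm α) :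
    (g.extendDomain e).partition.parts.card + Fintype.card α =
      g.partition.parts.card + Fintype.card β := by
  have h₁ := card_le_univ g.support
  have h₂ := card_le_univ (g.extendDomain e).support
  rw [card_support_extend_domain] at h₂
  rw [card_parts_partition, card_parts_partition, cycleType_extendDomain,
    card_support_extend_domain]
  omega

lemma decomposeFin_symm_zero {n : ℕ} (e : Perm (Fin n)) :
    decomposeFin.symm (0, e) = e.extendDomain (finSuccAboveEquiv 0) := by
  ext x
  refine Fin.cases ?_ (fun i => ?_) x
  · rw [decomposeFin_symm_apply_zero, extendDomain_apply_not_subtype _ _ (by simp)]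
  · have hi : i.succ = (finSuccAboveEquiv 0 i : Fin (n + 1)) := by simp [finSuccAboveEquiv_apply]
    rw [decomposeFin_symm_apply_succ, swap_self, hi, extendDomain_apply_image]
    simp [finSuccAboveEquiv_apply]

lemma decomposeFin_symm_eq_swap_mul {n : ℕ} (p : Fin (n + 1)) (e : Perm (Fin n)) :
    decomposeFin.symm (p, e) = swap 0 p * decomposeFin.symm (0, e) := by
  ext x
  refine Fin.cases ?_ (fun i => ?_) x <;> simp

end Equiv.Perm

open Equiv Equiv.Perm
open scoped Nat

lemma numCycles_eq_card_parts_partition {n : ℕ} (σ : Perm (Fin n)) :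
    numCycles σ = σ.partition.parts.card := by
  rw [numCycles, card_parts_partition]
  congr 1
  rw [← card_compl]
  congr 1
  ext x
  simp

lemma numCycles_decomposeFin_symm {n : ℕ} (p : Fin (n + 1)) (e : Perm (Fin n)) :
    numCycles (decomposeFin.symm (p, e)) = numCycles e + if p = 0 then 1 else 0 := by
  have hzero := card_parts_partition_extendDomain (finSuccAboveEquiv (0 : Fin (n + 1))) e
  rw [← decomposeFin_symm_zero, ← numCycles_eq_card_parts_partition,
    ← numCycles_eq_card_parts_partition, Fintype.card_fin, Fintype.card_fin] at hzero
  split_ifs with hp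
  · subst hp; omega
  · have hinsert := card_parts_partition_swap_mul (Ne.symm hp) (decomposeFin_symm_apply_zero 0 e)
    rw [← decomposeFin_symm_eq_swap_mul, ← numCycles_eq_card_parts_partition,
      ← numCycles_eq_card_parts_partition] at hinsert
    omega

lemma sum_sum_add_sq_of_sum_eq_zero {ι κ R : Type*} [Fintype ι] [Fintype κ] [CommRing R]
    (f : ι → R) (g : κ → R) (hf : ∑ i, f i = 0) :
    ∑ i, ∑ j, (f i + g j) ^ 2 =
      Fintype.card κ * ∑ i, f i ^ 2 + Fintype.card ι * ∑ j, g j ^ 2 := by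
  simp only [add_sq, sum_add_distrib, sum_const, nsmul_eq_mul, ← mul_sum, ← sum_mul, hf]
  rw [Finset.card_univ, Finset.card_univ]
  ring

lemma sum_perm_fin_succ {M : Type*} [AddCommMonoid M] {n : ℕ} (F : Perm (Fin (n + 1)) → M) :
    ∑ σ, F σ = ∑ p, ∑ e, F (decomposeFin.symm (p, e)) := by
  rw [← Fintype.sum_prod_type', Equiv.sum_comp decomposeFin.symm F]

theorem sum_sq_numCycles_sub_harmonic_le (n : ℕ) :
    ∑ σ : Perm (Fin n), ((numCycles σ : ℝ) - harmonic n) ^ 2 ≤ n ! * harmonic n := by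
  induction n with
  | zero => simp [numCycles]
  | succ n ih =>
    set Z : Fin (n + 1) → ℝ := fun p => (if p = 0 then 1 else 0) - ((n : ℝ) + 1)⁻¹
    have hn : ((n : ℝ) + 1) ≠ 0 := by positivity
    have hZ : ∑ p, Z p = 0 := by
      simp [Z, sum_sub_distrib, mul_inv_cancel₀ hn]
    have hZsq : ∑ p, Z p ^ 2 ≤ 1 := by
      simp only [Z, Fin.sum_univ_succ, ↓reduceIte, Fin.succ_ne_zero, zero_sub, even_two,
        Even.neg_pow, inv_pow, sum_const, Finset.card_univ, Fintype.card_fin, nsmul_eq_mul]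
      field_simp
      nlinarith
    have hstep : ∀ p e, (numCycles (decomposeFin.symm (p, e)) : ℝ) - harmonic (n + 1) =
        Z p + ((numCycles e : ℝ) - harmonic n) := by
      intro p e
      rw [numCycles_decomposeFin_symm, harmonic_succ]
      simp only [Z]
      split_ifs <;> push_cast <;> ring
    calc ∑ σ : Perm (Fin (n + 1)), ((numCycles σ : ℝ) - harmonic (n + 1)) ^ 2
        = ∑ p, ∑ e : Perm (Fin n), (Z p + ((numCycles e : ℝ) - harmonic n)) ^ 2 := by
          simp only [sum_perm_fin_succ, hstep]
      _ = n ! * ∑ p, Z p ^ 2 +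
            (n + 1) * ∑ e : Perm (Fin n), ((numCycles e : ℝ) - harmonic n) ^ 2 := by
          rw [sum_sum_add_sq_of_sum_eq_zero _ _ hZ]
          simp [Fintype.card_perm]
      _ ≤ n ! * 1 + (n + 1) * (n ! * harmonic n) := by gcongr
      _ = (n + 1)! * harmonic (n + 1) := by
          rw [harmonic_succ, Nat.factorial_succ]
          push_cast
          field_simp
          ring

lemma card_filter_le_abs_mul_sq_le {ι : Type*} (s : Finset ι) (f : ι → ℝ) {t : ℝ}
    (ht : 0 ≤ t) :
    #(s.filter fun i => t ≤ |f i|) * t ^ 2 ≤ ∑ i ∈ s, f i ^ 2 := by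
  calc #(s.filter fun i => t ≤ |f i|) * t ^ 2
        = ∑ i ∈ s.filter (fun i => t ≤ |f i|), t ^ 2 := by
        rw [sum_const, nsmul_eq_mul]
    _ ≤ ∑ i ∈ s.filter (fun i => t ≤ |f i|), f i ^ 2 :=
        sum_le_sum fun i hi => sq_abs (f i) ▸ pow_le_pow_left₀ ht (mem_filter.1 hi).2 2
    _ ≤ ∑ i ∈ s, f i ^ 2 :=
        sum_le_sum_of_subset_of_nonneg (filter_subset _ _) fun _ _ _ => sq_nonneg _

lemma badProb_nonneg (n : ℕ) (α : ℝ) : 0 ≤ badProb n α := by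
  unfold badProb
  positivity

lemma badProb_le_one (n : ℕ) (α : ℝ) : badProb n α ≤ 1 := by
  refine div_le_one_of_le₀ ?_ (by positivity)
  exact_mod_cast (card_le_univ _).trans_eq (by simp [Fintype.card_perm])

lemma badProb_le_of_two_le_mul_log {n : ℕ} {α : ℝ} (hα : 0 < α) (hL : 1 ≤ Real.log n)
    (hαL : 2 ≤ α * Real.log n) : badProb n α ≤ 8 / (α ^ 2 * Real.log n) := by
  set L := Real.log n
  have hL₀ : 0 < L := by linarith
  have hLH : L ≤ harmonic n := by simpa using log_le_harmonic_floor (n : ℝ) n.cast_nonneg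
  have hHL : (harmonic n : ℝ) ≤ 1 + L := harmonic_le_one_add_log n
  have hsub : (univ.filter fun σ : Perm (Fin n) => α < |(numCycles σ : ℝ) / L - 1|) ⊆
      univ.filter fun σ => α * L / 2 ≤ |(numCycles σ : ℝ) - harmonic n| := by
    intro σ
    simp only [mem_filter, mem_univ, true_and]
    intro hσ
    have hdev : α * L < |(numCycles σ : ℝ) - L| := by
      rwa [div_sub_one hL₀.ne', abs_div, abs_of_pos hL₀, lt_div_iff₀ hL₀] at hσ
    have hHL' : |(harmonic n : ℝ) - L| ≤ 1 := abs_le.2 ⟨by linarith, by linarith⟩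
    linarith [abs_sub_le (numCycles σ : ℝ) (harmonic n) L]
  have hcheb := card_filter_le_abs_mul_sq_le univ
    (fun σ : Perm (Fin n) => (numCycles σ : ℝ) - harmonic n) (t := α * L / 2) (by positivity)
  calc badProb n α
      ≤ #(univ.filter fun σ => α * L / 2 ≤ |(numCycles σ : ℝ) - harmonic n|) /
          (n ! : ℝ) := by
        unfold badProb
        gcongr
    _ ≤ n ! * harmonic n / (α * L / 2) ^ 2 / n ! := by
        gcongr
        rw [le_div_iff₀ (by positivity)]
        exact hcheb.trans (sum_sq_numCycles_sub_harmonic_le n)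
    _ ≤ 2 * L / (α * L / 2) ^ 2 := by
        rw [mul_div_assoc, mul_div_cancel_left₀ _ (by positivity)]
        gcongr
        linarith
    _ = 8 / (α ^ 2 * L) := by
        field_simp
        ring

lemma exists_badProb_le_div_log {α : ℝ} (hα : 0 < α) :
    ∃ C : ℝ, ∀ n : ℕ, 2 ≤ n → badProb n α ≤ C / Real.log n := by
  refine ⟨max (8 / α ^ 2) (max 1 (2 / α)), fun n hn => ?_⟩
  have hL : 0 < Real.log n := Real.log_pos (by exact_mod_cast hn)
  by_cases hlarge : 1 ≤ Real.log n ∧ 2 ≤ α * Real.log n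
  · calc badProb n α ≤ 8 / (α ^ 2 * Real.log n) :=
          badProb_le_of_two_le_mul_log hα hlarge.1 hlarge.2
      _ = 8 / α ^ 2 / Real.log n := by rw [div_div]
      _ ≤ _ := by gcongr; exact le_max_left _ _
  · have hsmall : Real.log n ≤ max 1 (2 / α) := by
      rcases not_and_or.mp hlarge with h | h
      · exact le_max_of_le_left (not_le.mp h).le
      · exact le_max_of_le_right ((le_div_iff₀' hα).2 (not_le.mp h).le)
    calc badProb n α ≤ 1 := badProb_le_one n α
      _ ≤ _ := (one_le_div hL).2 (hsmall.trans (le_max_right _ _))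

/-- For a uniform random permutation of `S_n`, `#(σ_n)/log n → 1` in probability,
and moreover `P(|#(σ_n)/log n − 1| > α) = O(1/log n)` for every fixed `α > 0`. -/
theorem uniform_numCycles_div_log (α : ℝ) (hα : 0 < α) :
    Tendsto (fun n => badProb n α) atTop (𝓝 0) ∧
      ∃ C : ℝ, ∀ n : ℕ, 2 ≤ n → badProb n α ≤ C / Real.log n := by
  obtain ⟨C, hC⟩ := exists_badProb_le_div_log hα
  refine ⟨squeeze_zero' (Eventually.of_forall fun n => badProb_nonneg n α)
    (eventually_atTop.2 ⟨2, hC⟩) ?_, C, hC⟩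
  exact tendsto_const_nhds.div_atTop (Real.tendsto_log_atTop.comp tendsto_natCast_atTop_atTop)
end
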